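/- arXiv:2411.09104 — 7 statements merged into one kernel-verified Lean document; each statement's English description precedes it below -/
import Mathlib

section
/- Consider maximizing spectral efficiency over continuous-aperture beamformers. Let μ be the Lebesgue measure on ℝ³ restricted to a measurable transmit aperture 𝒜, and let H_1,…,H_K ∈ L²(μ,ℂ) be the users' channel responses. For V = (V_1,…,V_K) ∈ (L²(μ,ℂ))^K define SE(V) = ∑_{k=1}^K log₂(1 + A_k·|∫ H_k·V_k dμ|² / (∑_{j≠k} A_j·|∫ H_k·V_j dμ|² + σ_k²)) and P(V) = ∑_{k=1}^K ‖V_k‖²_{L²}, where A_k > 0 and σ_k > 0. Suppose V* is feasible (P(V*) = P_max with P_max > 0), maximizes SE among all feasible tuples, and there exists j with ∫ H_j·V*_j dμ ≠ 0. Then for every k, V*_k lies in the ℂ-linear span (inside L²(μ,ℂ)) of the conjugate channel responses conj(H_1),…,conj(H_K); equivalently, there exist scalars b_{1k},…,b_{Kk} ∈ ℂ with V*_k = ∑_{j=1}^K b_{jk}·conj(H_j) in L²(μ,ℂ). -/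
/-!
Orthogonal projection onto `S = span {conj H_j}` leaves every `∫ H_k V_j = ⟪conj H_k, V_j⟫`
unchanged and does not increase the power, strictly decreasing it if some `V_k ∉ S`. The freed
power is then spent on rescaling all beams by `√τ` with `τ > 1`: this multiplies every signal and
interference gain by `τ`, so every SINR `τs / (τi + σ²)` grows, strictly for a user with nonzero
signal, contradicting optimality.
-/

open MeasureTheory Complex
open scoped InnerProductSpace

section SumRate

open Finset

/-- The spectral efficiency `SE` as a function of the gains `g k j = |∫ H_k V_j|²`. -/
noncomputable def sumRate {ι : Type*} [Fintype ι] [DecidableEq ι] (A σ : ι → ℝ)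
    (g : ι → ι → ℝ) : ℝ :=
  ∑ k, Real.logb 2 (1 + A k * g k k / (∑ j ∈ univ.erase k, A j * g k j + σ k ^ 2))

variable {s i n τ : ℝ}

lemma logb_one_add_div_le_mul (hs : 0 ≤ s) (hi : 0 ≤ i) (hn : 0 < n) (hτ : 1 ≤ τ) :
    Real.logb 2 (1 + s / (i + n)) ≤ Real.logb 2 (1 + τ * s / (τ * i + n)) := by
  have hle : s / (i + n) ≤ τ * s / (τ * i + n) := by
    rw [div_le_div_iff₀ (by positivity) (by nlinarith)]
    nlinarith [mul_nonneg (mul_nonneg (sub_nonneg.mpr hτ) hs) hn.le]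
  exact Real.logb_le_logb_of_le one_lt_two (by positivity) (by linarith)

lemma logb_one_add_div_lt_mul (hs : 0 < s) (hi : 0 ≤ i) (hn : 0 < n) (hτ : 1 < τ) :
    Real.logb 2 (1 + s / (i + n)) < Real.logb 2 (1 + τ * s / (τ * i + n)) := by
  have hlt : s / (i + n) < τ * s / (τ * i + n) := by
    rw [div_lt_div_iff₀ (by positivity) (by nlinarith)]
    nlinarith [mul_pos (mul_pos hs hn) (sub_pos.mpr hτ)]
  exact Real.logb_lt_logb one_lt_two (by positivity) (by linarith)

variable {ι : Type*} [Fintype ι] [DecidableEq ι] {A σ : ι → ℝ} {g : ι → ι → ℝ}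

theorem sumRate_lt_sumRate_smul (hA : ∀ k, 0 < A k) (hσ : ∀ k, σ k ≠ 0)
    (hg : ∀ k j, 0 ≤ g k j) (hτ : 1 < τ) (hsig : ∃ k, g k k ≠ 0) :
    sumRate A σ g < sumRate A σ (τ • g) := by
  obtain ⟨k₀, hk₀⟩ := hsig
  have hinterf : ∀ k, 0 ≤ ∑ j ∈ univ.erase k, A j * g k j := fun k =>
    sum_nonneg fun j _ => mul_nonneg (hA j).le (hg k j)
  have hscaled : ∀ k, A k * (τ • g) k k / (∑ j ∈ univ.erase k, A j * (τ • g) k j + σ k ^ 2)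
      = τ * (A k * g k k) / (τ * ∑ j ∈ univ.erase k, A j * g k j + σ k ^ 2) := by
    intro k
    simp only [Pi.smul_apply, smul_eq_mul, mul_sum]
    ring_nf
  unfold sumRate
  refine sum_lt_sum (fun k _ => ?_) ⟨k₀, mem_univ _, ?_⟩ <;> rw [hscaled]
  · exact logb_one_add_div_le_mul (mul_nonneg (hA k).le (hg k k)) (hinterf k)
      (sq_pos_of_ne_zero (hσ k)) hτ.le
  · exact logb_one_add_div_lt_mul (mul_pos (hA k₀) ((hg k₀ k₀).lt_of_ne' hk₀)) (hinterf k₀)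
      (sq_pos_of_ne_zero (hσ k₀)) hτ

end SumRate

section Projection

variable {𝕜 E ι : Type*} [RCLike 𝕜] [NormedAddCommGroup E] [InnerProductSpace 𝕜 E] [Fintype ι]

lemma norm_ofReal_sqrt_smul_sq {F : Type*} [NormedAddCommGroup F] [NormedSpace 𝕜 F] {τ : ℝ}
    (hτ : 0 ≤ τ) (x : F) : ‖((√τ : ℝ) : 𝕜) • x‖ ^ 2 = τ * ‖x‖ ^ 2 := by
  rw [norm_smul, RCLike.norm_ofReal, abs_of_nonneg (Real.sqrt_nonneg τ), mul_pow,
    Real.sq_sqrt hτ]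

lemma Submodule.inner_starProjection_of_mem_left (S : Submodule 𝕜 E) [S.HasOrthogonalProjection]
    {c : E} (hc : c ∈ S) (v : E) : ⟪c, S.starProjection v⟫_𝕜 = ⟪c, v⟫_𝕜 := by
  rw [← S.inner_starProjection_left_eq_right, S.starProjection_eq_self_iff.mpr hc]

lemma Submodule.sum_norm_sq_starProjection_lt (S : Submodule 𝕜 E) [S.HasOrthogonalProjection]
    {v : ι → E} (h : ∃ k, v k ∉ S) :
    ∑ k, ‖S.starProjection (v k)‖ ^ 2 < ∑ k, ‖v k‖ ^ 2 := by
  obtain ⟨k₀, hk₀⟩ := h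
  refine Finset.sum_lt_sum (fun k _ => by gcongr; exact S.norm_starProjection_apply_le _)
    ⟨k₀, Finset.mem_univ _, ?_⟩
  have hne : ‖S.starProjection (v k₀)‖ ≠ ‖v k₀‖ :=
    fun h => hk₀ ((S.mem_iff_norm_starProjection _).mpr h)
  gcongr
  exact (S.norm_starProjection_apply_le _).lt_of_ne hne

theorem Submodule.mem_of_isMaxOn_sumRate [DecidableEq ι] {A σ : ι → ℝ} (hA : ∀ k, 0 < A k)
    (hσ : ∀ k, σ k ≠ 0) (S : Submodule 𝕜 E) [S.HasOrthogonalProjection] {c v : ι → E}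
    (hc : ∀ k, c k ∈ S)
    (hopt : IsMaxOn (fun w : ι → E => sumRate A σ fun k j => ‖⟪c k, w j⟫_𝕜‖ ^ 2)
      {w | ∑ k, ‖w k‖ ^ 2 = ∑ k, ‖v k‖ ^ 2} v)
    (hsig : ∃ k, ⟪c k, v k⟫_𝕜 ≠ 0) (k : ι) : v k ∈ S := by
  by_contra hk
  set p : ι → E := fun j => S.starProjection (v j)
  have hinner : ∀ k j, ⟪c k, p j⟫_𝕜 = ⟪c k, v j⟫_𝕜 := fun k j =>
    S.inner_starProjection_of_mem_left (hc k) (v j)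
  have hlt : ∑ j, ‖p j‖ ^ 2 < ∑ j, ‖v j‖ ^ 2 := S.sum_norm_sq_starProjection_lt ⟨k, hk⟩
  have hpos : 0 < ∑ j, ‖p j‖ ^ 2 := by
    obtain ⟨j₀, hj₀⟩ := hsig
    have hp : p j₀ ≠ 0 := fun h => hj₀ (by rw [← hinner, h, inner_zero_right])
    exact Finset.sum_pos' (fun _ _ => by positivity) ⟨j₀, Finset.mem_univ _, by positivity⟩
  set τ := (∑ j, ‖v j‖ ^ 2) / ∑ j, ‖p j‖ ^ 2
  have hτ : 1 < τ := (one_lt_div hpos).mpr hlt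
  set w : ι → E := fun j => ((√τ : ℝ) : 𝕜) • p j
  have hw_power : ∑ j, ‖w j‖ ^ 2 = ∑ j, ‖v j‖ ^ 2 := by
    simp only [w, norm_ofReal_sqrt_smul_sq (zero_le_one.trans hτ.le), ← Finset.mul_sum]
    exact div_mul_cancel₀ _ hpos.ne'
  have hw_gain : (fun k j => ‖⟪c k, w j⟫_𝕜‖ ^ 2) = τ • fun k j => ‖⟪c k, v j⟫_𝕜‖ ^ 2 := by
    ext k j
    rw [inner_smul_right, ← smul_eq_mul, norm_ofReal_sqrt_smul_sq (zero_le_one.trans hτ.le),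
      hinner]
    rfl
  have hle : sumRate A σ (fun k j => ‖⟪c k, w j⟫_𝕜‖ ^ 2)
      ≤ sumRate A σ (fun k j => ‖⟪c k, v j⟫_𝕜‖ ^ 2) := hopt (show w ∈ {w | _} from hw_power)
  rw [hw_gain] at hle
  have hsig' : ∃ k, ‖⟪c k, v k⟫_𝕜‖ ^ 2 ≠ 0 := hsig.imp fun _ h => by positivity
  exact hle.not_gt (sumRate_lt_sumRate_smul hA hσ (fun _ _ => by positivity) hτ hsig')

end Projection

section L2

variable {α 𝕜 : Type*} [MeasurableSpace α] {μ : Measure α} [RCLike 𝕜]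

lemma MeasureTheory.MemLp.integral_mul_eq_inner_toLp {f g : α → 𝕜} (hf : MemLp f 2 μ)
    (hg : MemLp g 2 μ) :
    ∫ x, f x * g x ∂μ = ⟪hf.star.toLp (star f), hg.toLp g⟫_𝕜 := by
  rw [L2.inner_def]
  refine integral_congr_ae ?_
  filter_upwards [hf.star.coeFn_toLp, hg.coeFn_toLp] with x hfx hgx
  simp [hfx, hgx, mul_comm]

lemma MeasureTheory.MemLp.integral_norm_sq_eq_norm_toLp_sq {f : α → 𝕜} (hf : MemLp f 2 μ) :
    ∫ x, ‖f x‖ ^ 2 ∂μ = ‖hf.toLp f‖ ^ 2 := by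
  rw [← inner_self_eq_norm_sq (𝕜 := 𝕜), L2.inner_def, ← integral_re (L2.integrable_inner _ _)]
  refine integral_congr_ae ?_
  filter_upwards [hf.coeFn_toLp] with x hfx
  rw [hfx, inner_self_eq_norm_sq]

lemma MeasureTheory.MemLp.exists_ae_eq_sum_of_toLp_mem_span {ι : Type*} [Fintype ι] {f : α → 𝕜}
    {h : ι → α → 𝕜} (hf : MemLp f 2 μ) (hh : ∀ j, MemLp (h j) 2 μ)
    (hmem : hf.toLp f ∈ Submodule.span 𝕜 (Set.range fun j => (hh j).toLp (h j))) :
    ∃ b : ι → 𝕜, f =ᵐ[μ] fun x => ∑ j, b j * h j x := by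
  obtain ⟨b, hb⟩ := (Submodule.mem_span_range_iff_exists_fun 𝕜).mp hmem
  refine ⟨b, ?_⟩
  have hsum := Lp.coeFn_fun_finsetSum Finset.univ fun j => b j • (hh j).toLp (h j)
  have hsmul : ∀ᵐ x ∂μ, ∀ j, (b j • (hh j).toLp (h j)) x = b j * h j x :=
    ae_all_iff.mpr fun j => by
      filter_upwards [Lp.coeFn_smul (b j) ((hh j).toLp (h j)), (hh j).coeFn_toLp] with x h1 h2
      simp [h1, h2]
  filter_upwards [hf.coeFn_toLp, hsum, hsmul] with x hfx hsumx hsmulx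
  rw [← hfx, ← hb, hsumx]
  exact Finset.sum_congr rfl fun j _ => hsmulx j

end L2

theorem optimal_beamforming_in_conjugate_channel_span_general
    {K : ℕ}
    (μ : Measure (Fin 3 → ℝ))
    (H : Fin K → (Fin 3 → ℝ) → ℂ) (hH : ∀ k, MemLp (H k) 2 μ)
    (A σ : Fin K → ℝ) (hA : ∀ k, 0 < A k) (hσ : ∀ k, 0 < σ k)
    (Pmax : ℝ)
    (SE P : (Fin K → (Fin 3 → ℝ) → ℂ) → ℝ)
    (hSE : ∀ V, SE V = ∑ k, Real.logb 2
      (1 + A k * ‖∫ r, H k r * V k r ∂μ‖ ^ 2 /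
        ((∑ j ∈ Finset.univ.erase k, A j * ‖∫ r, H k r * V j r ∂μ‖ ^ 2) + σ k ^ 2)))
    (hP : ∀ V, P V = ∑ k, ∫ r, ‖V k r‖ ^ 2 ∂μ)
    (Vstar : Fin K → (Fin 3 → ℝ) → ℂ) (hVstar : ∀ k, MemLp (Vstar k) 2 μ)
    (hfeas : P Vstar = Pmax)
    (hopt : ∀ V : Fin K → (Fin 3 → ℝ) → ℂ,
      (∀ k, MemLp (V k) 2 μ) → P V = Pmax → SE V ≤ SE Vstar)
    (hsig : ∃ j, (∫ r, H j r * Vstar j r ∂μ) ≠ 0) :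
    ∀ k, ∃ b : Fin K → ℂ,
      Vstar k =ᵐ[μ] fun r => ∑ j, b j * (starRingEnd ℂ) (H j r) := by
  classical
  set c : Fin K → Lp ℂ 2 μ := fun k => (hH k).star.toLp (star (H k))
  set v : Fin K → Lp ℂ 2 μ := fun k => (hVstar k).toLp (Vstar k)
  set S := Submodule.span ℂ (Set.range c)
  have : FiniteDimensional ℂ S := FiniteDimensional.span_of_finite ℂ (Set.finite_range c)
  have : CompleteSpace S := FiniteDimensional.complete ℂ S
  have hSE_Lp : ∀ V (hV : ∀ k, MemLp (V k) 2 μ),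
      SE V = sumRate A σ fun k j => ‖⟪c k, (hV j).toLp (V j)⟫_ℂ‖ ^ 2 := fun V hV => by
    simp only [hSE, sumRate, (hH _).integral_mul_eq_inner_toLp (hV _)]
    rfl
  have hP_Lp : ∀ V (hV : ∀ k, MemLp (V k) 2 μ), P V = ∑ k, ‖(hV k).toLp (V k)‖ ^ 2 :=
    fun V hV => by simp only [hP, (hV _).integral_norm_sq_eq_norm_toLp_sq]
  have hmax : IsMaxOn (fun w : Fin K → Lp ℂ 2 μ => sumRate A σ fun k j => ‖⟪c k, w j⟫_ℂ‖ ^ 2)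
      {w | ∑ k, ‖w k‖ ^ 2 = ∑ k, ‖v k‖ ^ 2} v := fun w hw => by
    have hw' : ∀ k, MemLp (w k) 2 μ := fun k => Lp.memLp (w k)
    have hpower : P (fun k => w k) = Pmax := calc
      P (fun k => w k) = ∑ k, ‖w k‖ ^ 2 := by simp only [hP_Lp _ hw', Lp.toLp_coeFn]
      _ = P Vstar := by rw [hP_Lp _ hVstar]; exact hw
      _ = Pmax := hfeas
    have hle := hopt _ hw' hpower
    simp only [hSE_Lp _ hw', hSE_Lp _ hVstar, Lp.toLp_coeFn] at hle
    exact hle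
  have hsig_Lp : ∃ k, ⟪c k, v k⟫_ℂ ≠ 0 := by
    simpa only [(hH _).integral_mul_eq_inner_toLp (hVstar _)] using hsig
  intro k
  exact (hVstar k).exists_ae_eq_sum_of_toLp_mem_span (fun j => (hH j).star)
    (S.mem_of_isMaxOn_sumRate hA (fun k => (hσ k).ne') (fun j => Submodule.subset_span ⟨j, rfl⟩)
      hmax hsig_Lp k)

/-- **Proposition 1.** An SE-maximizing feasible beamformer tuple lies in the
subspace spanned by the conjugate channel responses. -/
theorem optimal_beamforming_in_conjugate_channel_span
    {K : ℕ} (hK : 1 ≤ K)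
    (𝒜 : Set (Fin 3 → ℝ)) (h𝒜 : MeasurableSet 𝒜)
    (μ : Measure (Fin 3 → ℝ)) (hμ : μ = volume.restrict 𝒜)
    (H : Fin K → (Fin 3 → ℝ) → ℂ) (hH : ∀ k, MemLp (H k) 2 μ)
    (A σ : Fin K → ℝ) (hA : ∀ k, 0 < A k) (hσ : ∀ k, 0 < σ k)
    (Pmax : ℝ) (hPmax : 0 < Pmax)
    (SE P : (Fin K → (Fin 3 → ℝ) → ℂ) → ℝ)
    (hSE : ∀ V, SE V = ∑ k, Real.logb 2
      (1 + A k * ‖∫ r, H k r * V k r ∂μ‖ ^ 2 /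
        ((∑ j ∈ Finset.univ.erase k, A j * ‖∫ r, H k r * V j r ∂μ‖ ^ 2) + σ k ^ 2)))
    (hP : ∀ V, P V = ∑ k, ∫ r, ‖V k r‖ ^ 2 ∂μ)
    (Vstar : Fin K → (Fin 3 → ℝ) → ℂ) (hVstar : ∀ k, MemLp (Vstar k) 2 μ)
    (hfeas : P Vstar = Pmax)
    (hopt : ∀ V : Fin K → (Fin 3 → ℝ) → ℂ,
      (∀ k, MemLp (V k) 2 μ) → P V = Pmax → SE V ≤ SE Vstar)
    (hsig : ∃ j, (∫ r, H j r * Vstar j r ∂μ) ≠ 0) :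
    ∀ k, ∃ b : Fin K → ℂ,
      Vstar k =ᵐ[μ] fun r => ∑ j, b j * (starRingEnd ℂ) (H j r) :=
  optimal_beamforming_in_conjugate_channel_span_general μ H hH A σ hA hσ Pmax SE P hSE hP Vstar
    hVstar hfeas hopt hsig
end

section
/- Fix a measurable transmit aperture 𝒜 ⊆ ℝ³, a channel kernel H : ℝ³ × ℝ³ → ℂ, user positions s : Fin K → ℝ³, and coefficients B : Fin K → Fin K → ℂ, and define the beamformers V^{B,s}_k(r) = ∑_{i} B i k · conj(H(r, s i)). Assume that for all k, i the function r ↦ H(r, s k)·conj(H(r, s i)) is Lebesgue-integrable on 𝒜. For A > 0 and σ₀ > 0 define the per-user SINR γ_k(B, s) = A·|∫_𝒜 H(r, s k)·V^{B,s}_k(r) dr|² / (∑_{j≠k} A·|∫_𝒜 H(r, s k)·V^{B,s}_j(r) dr|² + σ₀²). Then for every permutation π of Fin K, with B' i k = B (π i) (π k) and s' k = s (π k), one has γ_k(B', s') = γ_{π(k)}(B, s) for every k. -/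
open MeasureTheory

/-- The beamformer of user `k`: the linear combination `V_k(r) = ∑ i, B i k · conj (H (r, s i))`
of the conjugate channel responses. -/
noncomputable def capaBeamformer {K : ℕ} (H : (Fin 3 → ℝ) → (Fin 3 → ℝ) → ℂ)
    (s : Fin K → Fin 3 → ℝ) (B : Fin K → Fin K → ℂ) (k : Fin K) (r : Fin 3 → ℝ) : ℂ :=
  ∑ i, B i k * (starRingEnd ℂ) (H r (s i))

/-- The SINR `γ_k(B, s)` of user `k`. -/
noncomputable def capaSINR {K : ℕ} (𝒜 : Set (Fin 3 → ℝ))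
    (H : (Fin 3 → ℝ) → (Fin 3 → ℝ) → ℂ) (A σ₀ : ℝ)
    (B : Fin K → Fin K → ℂ) (s : Fin K → Fin 3 → ℝ) (k : Fin K) : ℝ :=
  A * ‖∫ r in 𝒜, H r (s k) * capaBeamformer H s B k r‖ ^ 2 /
    ((∑ j ∈ Finset.univ.erase k,
        A * ‖∫ r in 𝒜, H r (s k) * capaBeamformer H s B j r‖ ^ 2) + σ₀ ^ 2)

lemma capaBeamformer_perm {K : ℕ} (H : (Fin 3 → ℝ) → (Fin 3 → ℝ) → ℂ)
    (s : Fin K → Fin 3 → ℝ) (B : Fin K → Fin K → ℂ) (π : Equiv.Perm (Fin K))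
    (k : Fin K) (r : Fin 3 → ℝ) :
    capaBeamformer H (fun j => s (π j)) (fun i j => B (π i) (π j)) k r =
      capaBeamformer H s B (π k) r := by
  unfold capaBeamformer
  exact Equiv.sum_comp π (fun i => B i (π k) * (starRingEnd ℂ) (H r (s i)))

/-- **Proposition 2, SINR equivariance.** Under a joint permutation of users and
data streams, the SINR of user `k` in the permuted system equals the SINR of user `π k` in the
original system. -/
theorem capaSINR_perm_equivariant
    {K : ℕ} (hK : 1 ≤ K)
    (𝒜 : Set (Fin 3 → ℝ)) (h𝒜 : MeasurableSet 𝒜)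
    (H : (Fin 3 → ℝ) → (Fin 3 → ℝ) → ℂ)
    (s : Fin K → Fin 3 → ℝ) (B : Fin K → Fin K → ℂ)
    (hint : ∀ k i, IntegrableOn (fun r => H r (s k) * (starRingEnd ℂ) (H r (s i))) 𝒜)
    (A σ₀ : ℝ) (hA : 0 < A) (hσ₀ : 0 < σ₀)
    (π : Equiv.Perm (Fin K)) (k : Fin K) :
    capaSINR 𝒜 H A σ₀ (fun i j => B (π i) (π j)) (fun j => s (π j)) k =
      capaSINR 𝒜 H A σ₀ B s (π k) := by
  unfold capaSINR
  have hbf : ∀ j r, capaBeamformer H (fun j => s (π j)) (fun i j => B (π i) (π j)) j r =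
      capaBeamformer H s B (π j) r := fun j r => capaBeamformer_perm H s B π j r
  simp only [hbf]
  congr 2
  refine Finset.sum_nbij' (fun j => π j) (fun j => π.symm j) ?_ ?_ ?_ ?_ ?_
  · intro j hj
    simp only [Finset.mem_erase, Finset.mem_univ, and_true] at hj ⊢
    exact fun h => hj (π.injective h)
  · intro j hj
    simp only [Finset.mem_erase, Finset.mem_univ, and_true] at hj ⊢
    intro h
    exact hj ((Equiv.symm_apply_eq π).mp h)
  · intro j _; simp
  · intro j _; simp
  · intro j _; rfl
end

section
/- Fix a measurable transmit aperture 𝒜 ⊆ ℝ³, a channel kernel H : ℝ³ × ℝ³ → ℂ, user positions s : Fin K → ℝ³, and coefficients B : Fin K → Fin K → ℂ, and define V^{B,s}_k(r) = ∑_{j} B j k · conj(H(r, s j)) with per-user power p_k(B, s) = ∫_𝒜 |V^{B,s}_k(r)|² dr. Assume that for each k the function r ↦ |V^{B,s}_k(r)|² is Lebesgue-integrable on 𝒜. Then for all permutations π₁, π₂ of Fin K, defining B' j k = B (π₁ j) (π₂ k) and s' j = s (π₁ j), one has p_k(B', s') = p_{π₂(k)}(B, s) for every k; in matrix notation, the power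 map F_Proj satisfies Π₂ᵀ p = F_Proj(Π₁ᵀ S, Π₁ᵀ B Π₂). -/
open MeasureTheory

/-- The per-user transmit power `p_k(B, s) = ∫_𝒜 |∑ j, B j k · conj (H (r, s j))|² dr`
(the map `F_Proj`). -/
noncomputable def capaPower {K : ℕ} (𝒜 : Set (Fin 3 → ℝ))
    (H : (Fin 3 → ℝ) → (Fin 3 → ℝ) → ℂ)
    (B : Fin K → Fin K → ℂ) (s : Fin K → Fin 3 → ℝ) (k : Fin K) : ℝ :=
  ∫ r in 𝒜, ‖∑ j, B j k * (starRingEnd ℂ) (H r (s j))‖ ^ 2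

/-- **Proposition 3.** The power map `F_Proj` satisfies the independent
permutation property `Π₂ᵀ p = F_Proj(Π₁ᵀ S, Π₁ᵀ B Π₂)`: permuting the rows of `B` and the user
positions by `π₁` and the columns of `B` by `π₂` permutes the power vector by `π₂`. -/
theorem capaPower_independent_perm
    {K : ℕ} (hK : 1 ≤ K)
    (𝒜 : Set (Fin 3 → ℝ)) (h𝒜 : MeasurableSet 𝒜)
    (H : (Fin 3 → ℝ) → (Fin 3 → ℝ) → ℂ)
    (s : Fin K → Fin 3 → ℝ) (B : Fin K → Fin K → ℂ)
    (hint : ∀ k, IntegrableOn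
      (fun r => ‖∑ j, B j k * (starRingEnd ℂ) (H r (s j))‖ ^ 2) 𝒜)
    (π₁ π₂ : Equiv.Perm (Fin K)) (k : Fin K) :
    capaPower 𝒜 H (fun j k => B (π₁ j) (π₂ k)) (fun j => s (π₁ j)) k =
      capaPower 𝒜 H B s (π₂ k) := by
  unfold capaPower
  congr 1
  ext r
  congr 1
  congr 1
  exact Equiv.sum_comp π₁ (fun j => B j (π₂ k) * (starRingEnd ℂ) (H r (s j)))
end

section
/- Let d, d' ∈ ℕ, let W₁, W₂, W₃ : ℝ^d →ₗ ℝ^{d'} be linear maps, and let σ : ℝ^{d'} → ℝ^{d'} be an arbitrary function. For edge representations E : Fin K → Fin K → ℝ^d define the GNN layer update F(E) : Fin K → Fin K → ℝ^{d'} by F(E) k j = σ(W₁(E k j) + ∑_{i ≠ j} W₂(E k i) + ∑_{i ≠ k} W₃(E i j)). Then F is equivariant to independent permutations of the two edge indices: for all permutations π₁, π₂ of Fin K and all E, F(fun k j => E (π₁ k) (π₂ j)) k j = F(E) (π₁ k) (π₂ j) for all k, j. -/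
lemma erase_perm_sum {K : ℕ} {M : Type*} [AddCommMonoid M]
    (π : Equiv.Perm (Fin K)) (j : Fin K) (f : Fin K → M) :
    ∑ i ∈ Finset.univ.erase j, f (π i) = ∑ i ∈ Finset.univ.erase (π j), f i := by
  refine Finset.sum_equiv π (fun i => ?_) (fun i _ => rfl)
  simp [Ne, π.injective.eq_iff]

/-- **single layer of GNN-G₂, equation (16).** The edge-update layer
`F(E) k j = σ(W₁(E k j) + ∑_{i ≠ j} W₂(E k i) + ∑_{i ≠ k} W₃(E i j))` is equivariant to
independent permutations of the two edge indices. -/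
theorem gnn_g2_layer_independent_perm_equivariant
    {K d d' : ℕ} (hK : 1 ≤ K)
    (W₁ W₂ W₃ : (Fin d → ℝ) →ₗ[ℝ] (Fin d' → ℝ))
    (σ : (Fin d' → ℝ) → (Fin d' → ℝ))
    (F : (Fin K → Fin K → Fin d → ℝ) → (Fin K → Fin K → Fin d' → ℝ))
    (hF : ∀ E k j, F E k j = σ (W₁ (E k j)
      + ∑ i ∈ Finset.univ.erase j, W₂ (E k i)
      + ∑ i ∈ Finset.univ.erase k, W₃ (E i j)))
    (π₁ π₂ : Equiv.Perm (Fin K))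
    (E : Fin K → Fin K → Fin d → ℝ) (k j : Fin K) :
    F (fun k j => E (π₁ k) (π₂ j)) k j = F E (π₁ k) (π₂ j) := by
  rw [hF, hF]
  congr 1
  rw [erase_perm_sum π₂ j (fun i => W₂ (E (π₁ k) i)),
      erase_perm_sum π₁ k (fun i => W₃ (E i (π₂ j)))]
end

section
/- Let L ≥ 1 and let F₁, …, F_L be GNN layer updates of the following form: for each ℓ there are dimensions d_ℓ, d_{ℓ+1}, linear maps W₁^{(ℓ)}, W₂^{(ℓ)}, W₃^{(ℓ)} : ℝ^{d_ℓ} →ₗ ℝ^{d_{ℓ+1}} and a function σ_ℓ : ℝ^{d_{ℓ+1}} → ℝ^{d_{ℓ+1}}, and F_ℓ(E) k j = σ_ℓ(W₁^{(ℓ)}(E k j) + ∑_{i ≠ j} W₂^{(ℓ)}(E k i) + ∑_{i ≠ k} W₃^{(ℓ)}(E i j)) for E : Fin K → Fin K → ℝ^{d_ℓ}. Then the composed network N = F_L ∘ ⋯ ∘ F₁ is equivariant to independent permutations of the two edge indices: for all permutations π₁, π₂ of Fin K and all E : Fin K → Fin K → ℝ^{d_1}, N(fun k j => E (π₁ k)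 (π₂ j)) k j = N(E) (π₁ k) (π₂ j) for all k, j. -/
/-- Applying the first `L` layers `F 0, …, F (L-1)` of a GNN to the input edge
representations: `N = F (L-1) ∘ ⋯ ∘ F 0`. -/
def applyGNNLayers {K : ℕ} (d : ℕ → ℕ)
    (F : ∀ ℓ : ℕ, (Fin K → Fin K → Fin (d ℓ) → ℝ) → (Fin K → Fin K → Fin (d (ℓ + 1)) → ℝ)) :
    ∀ L : ℕ, (Fin K → Fin K → Fin (d 0) → ℝ) → (Fin K → Fin K → Fin (d L) → ℝ)
  | 0 => id
  | (L + 1) => fun E => F L (applyGNNLayers d F L E)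

/-- **L-layer GNN-G₂.** If every layer has the form of equation (16), i.e.
`F_ℓ(E) k j = σ_ℓ(W₁(E k j) + ∑_{i ≠ j} W₂(E k i) + ∑_{i ≠ k} W₃(E i j))` for some linear maps
`W₁, W₂, W₃` and some activation `σ_ℓ`, then the composed network is equivariant to
independent permutations of the two edge indices. -/
theorem gnn_g2_network_independent_perm_equivariant
    {K : ℕ} (hK : 1 ≤ K) (L : ℕ) (hL : 1 ≤ L) (d : ℕ → ℕ)
    (F : ∀ ℓ : ℕ, (Fin K → Fin K → Fin (d ℓ) → ℝ) → (Fin K → Fin K → Fin (d (ℓ + 1)) → ℝ))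
    (hF : ∀ ℓ < L, ∃ (W₁ W₂ W₃ : (Fin (d ℓ) → ℝ) →ₗ[ℝ] (Fin (d (ℓ + 1)) → ℝ))
      (σ : (Fin (d (ℓ + 1)) → ℝ) → (Fin (d (ℓ + 1)) → ℝ)),
      ∀ E k j, F ℓ E k j = σ (W₁ (E k j)
        + ∑ i ∈ Finset.univ.erase j, W₂ (E k i)
        + ∑ i ∈ Finset.univ.erase k, W₃ (E i j)))
    (π₁ π₂ : Equiv.Perm (Fin K))
    (E : Fin K → Fin K → Fin (d 0) → ℝ) (k j : Fin K) :
    applyGNNLayers d F L (fun k j => E (π₁ k) (π₂ j)) k j =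
      applyGNNLayers d F L E (π₁ k) (π₂ j) := by
  clear hK hL
  induction L generalizing k j with
  | zero => rfl
  | succ L ih =>
    obtain ⟨W₁, W₂, W₃, σ, hσ⟩ := hF L (Nat.lt_succ_self L)
    have ih' : ∀ k j, applyGNNLayers d F L (fun k j => E (π₁ k) (π₂ j)) k j
        = applyGNNLayers d F L E (π₁ k) (π₂ j) :=
      fun k j => ih (fun ℓ hℓ => hF ℓ (hℓ.trans (Nat.lt_succ_self L))) k j
    set A := applyGNNLayers d F L (fun k j => E (π₁ k) (π₂ j)) with hA
    set B := applyGNNLayers d F L E with hB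
    show F L A k j = F L B (π₁ k) (π₂ j)
    rw [hσ, hσ, ih' k j]
    have h2 : ∑ i ∈ Finset.univ.erase j, W₂ (A k i)
        = ∑ i ∈ Finset.univ.erase (π₂ j), W₂ (B (π₁ k) i) := by
      refine Finset.sum_equiv π₂ (fun i => ?_) (fun i _ => by rw [ih' k i])
      simp [Finset.mem_erase, π₂.injective.ne_iff]
    have h3 : ∑ i ∈ Finset.univ.erase k, W₃ (A i j)
        = ∑ i ∈ Finset.univ.erase (π₁ k), W₃ (B i (π₂ j)) := by
      refine Finset.sum_equiv π₁ (fun i => ?_) (fun i _ => by rw [ih' i j])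
      simp [Finset.mem_erase, π₁.injective.ne_iff]
    rw [h2, h3]
end

section
/- Let d, d' ∈ ℕ, let W₁, …, W₉ : ℝ^d →ₗ ℝ^{d'} be linear maps, and let σ : ℝ^{d'} → ℝ^{d'} be an arbitrary function. For K ≥ 1 and edge representations E : Fin K → Fin K → ℝ^d define the GNN layer update F(E) : Fin K → Fin K → ℝ^{d'} by: F(E) k k = σ(W₁(E k k) + ∑_{j ≠ k} W₂(E j k) + ∑_{j ≠ k} W₃(E k j)) for diagonal (signal) edges, and for k ≠ j, F(E) k j = σ(W₄(E k j) + ∑_{i ≠ j, i ≠ k} W₅(E j i) + ∑_{i ≠ j, i ≠ k} W₆(E k i) + ∑_{i ≠ j, i ≠ k} W₇(E i j) + W₈(E k k) + W₉(E j j)). Then F is equivariant to joint permutation of the two edge indices: for every permutation π of Fin K and all E, F(fun k j => E (π k) (π j)) k j = F(E) (π k) (π j) for all k, j. -/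
/-- **single layer of GNN-G₁, equation (13).** The two-edge-type layer update,
with separate weight matrices for diagonal (equivalent signal) edges and off-diagonal
(equivalent interference) edges, is equivariant to joint permutation of the two edge indices. -/
theorem gnn_g1_layer_joint_perm_equivariant
    {K d d' : ℕ} (hK : 1 ≤ K)
    (W₁ W₂ W₃ W₄ W₅ W₆ W₇ W₈ W₉ : (Fin d → ℝ) →ₗ[ℝ] (Fin d' → ℝ))
    (σ : (Fin d' → ℝ) → (Fin d' → ℝ))
    (F : (Fin K → Fin K → Fin d → ℝ) → (Fin K → Fin K → Fin d' → ℝ))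
    (hFdiag : ∀ E k, F E k k = σ (W₁ (E k k)
      + ∑ j ∈ Finset.univ.erase k, W₂ (E j k)
      + ∑ j ∈ Finset.univ.erase k, W₃ (E k j)))
    (hFoff : ∀ E k j, k ≠ j → F E k j = σ (W₄ (E k j)
      + ∑ i ∈ (Finset.univ.erase j).erase k, W₅ (E j i)
      + ∑ i ∈ (Finset.univ.erase j).erase k, W₆ (E k i)
      + ∑ i ∈ (Finset.univ.erase j).erase k, W₇ (E i j)
      + W₈ (E k k) + W₉ (E j j)))
    (π : Equiv.Perm (Fin K))
    (E : Fin K → Fin K → Fin d → ℝ) (k j : Fin K) :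
    F (fun k j => E (π k) (π j)) k j = F E (π k) (π j) := by
  have h1 : ∀ (a : Fin K) (f : Fin K → (Fin d' → ℝ)),
      ∑ i ∈ Finset.univ.erase a, f (π i) = ∑ i ∈ Finset.univ.erase (π a), f i := by
    intro a f
    apply Finset.sum_nbij' (fun i => π i) (fun i => π.symm i) <;>
      simp [Finset.mem_erase, π.injective.ne_iff, Equiv.symm_apply_eq, Equiv.eq_symm_apply, eq_comm]
  have h2 : ∀ (a b : Fin K) (f : Fin K → (Fin d' → ℝ)),
      ∑ i ∈ (Finset.univ.erase b).erase a, f (π i)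
        = ∑ i ∈ (Finset.univ.erase (π b)).erase (π a), f i := by
    intro a b f
    apply Finset.sum_nbij' (fun i => π i) (fun i => π.symm i) <;>
      simp [Finset.mem_erase, π.injective.ne_iff, Equiv.symm_apply_eq, Equiv.eq_symm_apply, eq_comm]
  rcases eq_or_ne k j with rfl | hkj
  · rw [hFdiag, hFdiag, h1 k (fun i => W₂ (E i (π k))), h1 k (fun i => W₃ (E (π k) i))]
  · rw [hFoff _ _ _ hkj, hFoff _ _ _ (fun h => hkj (π.injective h)),
      h2 k j (fun i => W₅ (E (π j) i)), h2 k j (fun i => W₆ (E (π k) i)),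
      h2 k j (fun i => W₇ (E i (π j)))]
end

section
/- Let L ≥ 1 and let F₁, …, F_L be GNN layer updates of the two-edge-type form: for each ℓ there are dimensions d_ℓ, d_{ℓ+1}, linear maps W₁^{(ℓ)}, …, W₉^{(ℓ)} : ℝ^{d_ℓ} →ₗ ℝ^{d_{ℓ+1}} and a function σ_ℓ : ℝ^{d_{ℓ+1}} → ℝ^{d_{ℓ+1}}, with F_ℓ(E) k k = σ_ℓ(W₁^{(ℓ)}(E k k) + ∑_{j ≠ k} W₂^{(ℓ)}(E j k) + ∑_{j ≠ k} W₃^{(ℓ)}(E k j)) and, for k ≠ j, F_ℓ(E) k j = σ_ℓ(W₄^{(ℓ)}(E k j) + ∑_{i ≠ j, i ≠ k} W₅^{(ℓ)}(E j i) + ∑_{i ≠ j, i ≠ k} W₆^{(ℓ)}(E k i) + ∑_{i ≠ j, i ≠ k} W₇^{(ℓ)}(E i j) + W₈^{(ℓ)}(E k k) + W₉^{(ℓ)}(E j j)). Then the composed network N = F_L ∘ ⋯ ∘ F₁ is equivariant to joint permutation of the two edge indices: for every permutation π of Fin K and all E : Fin K → Fin K → ℝ^{d_1}, N(fun k j =>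 E (π k) (π j)) k j = N(E) (π k) (π j) for all k, j. -/
private lemma perm_sum_erase {K : ℕ} {M : Type*} [AddCommMonoid M]
    (π : Equiv.Perm (Fin K)) (k : Fin K) (g : Fin K → M) :
    ∑ j ∈ Finset.univ.erase (π k), g j = ∑ j ∈ Finset.univ.erase k, g (π j) := by
  refine (Finset.sum_equiv π (fun i => ?_) (fun i _ => rfl)).symm
  simp [Finset.mem_erase, π.injective.ne_iff]

private lemma perm_sum_erase2 {K : ℕ} {M : Type*} [AddCommMonoid M]
    (π : Equiv.Perm (Fin K)) (k j : Fin K) (g : Fin K → M) :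
    ∑ i ∈ (Finset.univ.erase (π j)).erase (π k), g i =
      ∑ i ∈ (Finset.univ.erase j).erase k, g (π i) := by
  refine (Finset.sum_equiv π (fun i => ?_) (fun i _ => rfl)).symm
  simp [Finset.mem_erase, π.injective.ne_iff, and_assoc]

/-- **L-layer GNN-G₁.** If every layer has the two-edge-type form of
equation (13) — with separate weight matrices for diagonal (equivalent signal) edges and
off-diagonal (equivalent interference) edges — then the composed network is equivariant to
joint permutation of the two edge indices. -/
theorem gnn_g1_network_joint_perm_equivariant
    {K : ℕ} (hK : 1 ≤ K) (L : ℕ) (hL : 1 ≤ L) (d : ℕ → ℕ)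
    (F : ∀ ℓ : ℕ, (Fin K → Fin K → Fin (d ℓ) → ℝ) → (Fin K → Fin K → Fin (d (ℓ + 1)) → ℝ))
    (hF : ∀ ℓ < L, ∃ (W₁ W₂ W₃ W₄ W₅ W₆ W₇ W₈ W₉ :
        (Fin (d ℓ) → ℝ) →ₗ[ℝ] (Fin (d (ℓ + 1)) → ℝ))
      (σ : (Fin (d (ℓ + 1)) → ℝ) → (Fin (d (ℓ + 1)) → ℝ)),
      (∀ E k, F ℓ E k k = σ (W₁ (E k k)
        + ∑ j ∈ Finset.univ.erase k, W₂ (E j k)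
        + ∑ j ∈ Finset.univ.erase k, W₃ (E k j))) ∧
      (∀ E k j, k ≠ j → F ℓ E k j = σ (W₄ (E k j)
        + ∑ i ∈ (Finset.univ.erase j).erase k, W₅ (E j i)
        + ∑ i ∈ (Finset.univ.erase j).erase k, W₆ (E k i)
        + ∑ i ∈ (Finset.univ.erase j).erase k, W₇ (E i j)
        + W₈ (E k k) + W₉ (E j j))))
    (π : Equiv.Perm (Fin K))
    (E : Fin K → Fin K → Fin (d 0) → ℝ) (k j : Fin K) :
    applyGNNLayers d F L (fun k j => E (π k) (π j)) k j =
      applyGNNLayers d F L E (π k) (π j) := by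
  clear hK hL
  induction L generalizing k j with
  | zero => rfl
  | succ L ih =>
    obtain ⟨W₁, W₂, W₃, W₄, W₅, W₆, W₇, W₈, W₉, σ, hdiag, hoff⟩ := hF L (Nat.lt_succ_self L)
    have ih' : ∀ a b, applyGNNLayers d F L (fun k j => E (π k) (π j)) a b
        = applyGNNLayers d F L E (π a) (π b) :=
      fun a b => ih (fun ℓ hℓ => hF ℓ (hℓ.trans (Nat.lt_succ_self L))) a b
    set A := applyGNNLayers d F L (fun a b => E (π a) (π b)) with hA
    set B := applyGNNLayers d F L E with hB
    show F L A k j = F L B (π k) (π j)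
    by_cases hkj : k = j
    · subst hkj
      rw [hdiag A k, hdiag B (π k)]
      congr 1
      rw [perm_sum_erase π k (fun i => W₂ (B i (π k))),
        perm_sum_erase π k (fun i => W₃ (B (π k) i))]
      simp only [ih']
    · rw [hoff A k j hkj, hoff B (π k) (π j) (fun h => hkj (π.injective h))]
      congr 1
      rw [perm_sum_erase2 π k j (fun i => W₅ (B (π j) i)),
        perm_sum_erase2 π k j (fun i => W₆ (B (π k) i)),
        perm_sum_erase2 π k j (fun i => W₇ (B i (π j)))]
      simp only [ih']
end
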